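/- arXiv:2510.20917 — 2 statements merged into one kernel-verified Lean document; each statement's English description precedes it below -/
import Mathlib

section
/- If y is feasible for the relaxed (inequality-constrained) hanging chain problem and satisfies the spanning constraint strictly (Σ sqrt(ℓ_i^2 - y_i^2) > d), then y is not optimal: there exists a feasible ŷ with strictly smaller objective value. -/
/-!
At a point where the spanning constraint is slack, at least two links are not vertical, since
otherwise the horizontal span would be at most a single length `ℓ_a < d`. Pick two such links
`p < q`. Shifting a small amount `t > 0` of height from link `p` to link `q` keeps `Σ y_i = 0`,
keeps `|y_i| ≤ ℓ_i` and, by continuity, keeps the span above `d`, while it changes the objective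
by `t (c_q - c_p) < 0` because the weights `c_i` are strictly decreasing.
-/

open Finset Filter Topology

section Weights

variable {ι : Type*} [LinearOrder ι] [Fintype ι]

theorem strictAnti_half_add_sum_gt {m : ι → ℝ} (hm : ∀ i, 0 < m i) :
    StrictAnti fun i => m i / 2 + ∑ j ∈ univ.filter (fun j => i < j), m j := by
  intro p q hpq
  have hsub : insert q (univ.filter (fun j => q < j)) ⊆ univ.filter (fun j => p < j) := by
    intro j hj
    simp only [mem_insert, mem_filter, mem_univ, true_and] at hj ⊢
    rcases hj with rfl | hj
    exacts [hpq, hpq.trans hj]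
  have hle := sum_le_sum_of_subset_of_nonneg hsub fun j _ _ => (hm j).le
  rw [sum_insert (by simp)] at hle
  linarith [hm p, hm q]

end Weights

section Span

theorem Real.sqrt_sq_sub_sq_le {ℓ y : ℝ} (h : |y| ≤ ℓ) : √(ℓ ^ 2 - y ^ 2) ≤ ℓ :=
  (Real.sqrt_le_left ((abs_nonneg y).trans h)).2 (by nlinarith [sq_nonneg y])

theorem Real.sqrt_sq_sub_sq_eq_zero {ℓ y : ℝ} (h : |y| = ℓ) : √(ℓ ^ 2 - y ^ 2) = 0 := by
  rw [← h, sq_abs, sub_self, Real.sqrt_zero]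

variable {ι : Type*} [Fintype ι] {ℓ y : ι → ℝ} {d : ℝ}

theorem exists_ne_abs_lt_of_lt_sum_sqrt [Nonempty ι] (hd : ∀ i, ℓ i < d)
    (hy : ∀ i, |y i| ≤ ℓ i) (hspan : d < ∑ i, √(ℓ i ^ 2 - y i ^ 2)) :
    ∃ p q, p ≠ q ∧ |y p| < ℓ p ∧ |y q| < ℓ q := by
  by_contra! hcon
  obtain ⟨a, ha⟩ : ∃ a, ∀ j ≠ a, ℓ j ≤ |y j| := by
    by_cases hslack : ∃ a, |y a| < ℓ a
    · obtain ⟨a, ha⟩ := hslack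
      exact ⟨a, fun j hj => hcon a j hj.symm ha⟩
    · push Not at hslack
      exact ⟨Classical.arbitrary ι, fun j _ => hslack j⟩
  rw [Fintype.sum_eq_single a fun j hj =>
    Real.sqrt_sq_sub_sq_eq_zero ((hy j).antisymm (ha j hj))] at hspan
  linarith [Real.sqrt_sq_sub_sq_le (hy a), hd a]

theorem exists_lt_abs_lt_of_lt_sum_sqrt [LinearOrder ι] [Nonempty ι] (hd : ∀ i, ℓ i < d)
    (hy : ∀ i, |y i| ≤ ℓ i) (hspan : d < ∑ i, √(ℓ i ^ 2 - y i ^ 2)) :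
    ∃ p q, p < q ∧ |y p| < ℓ p ∧ |y q| < ℓ q := by
  obtain ⟨p, q, hpq, hp, hq⟩ := exists_ne_abs_lt_of_lt_sum_sqrt hd hy hspan
  rcases hpq.lt_or_gt with h | h
  exacts [⟨p, q, h, hp, hq⟩, ⟨q, p, h, hq, hp⟩]

theorem exists_pos_feasible_of_lt_sum_sqrt {v : ι → ℝ} (hv : ∀ i, v i ≠ 0 → |y i| < ℓ i)
    (hy : ∀ i, |y i| ≤ ℓ i) (hspan : d < ∑ i, √(ℓ i ^ 2 - y i ^ 2)) :
    ∃ t > 0, (∀ i, |y i + t * v i| ≤ ℓ i) ∧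
      d < ∑ i, √(ℓ i ^ 2 - (y i + t * v i) ^ 2) := by
  have hfeas : ∀ᶠ t in 𝓝 (0 : ℝ), ∀ i, |y i + t * v i| ≤ ℓ i := by
    refine eventually_all.2 fun i => ?_
    by_cases hvi : v i = 0
    · simp [hvi, hy i]
    · have hcont : Continuous fun t : ℝ => |y i + t * v i| := by fun_prop
      refine (hcont.continuousAt.eventually_lt continuousAt_const ?_).mono fun _ => le_of_lt
      simpa using hv i hvi
  have hslack : ∀ᶠ t in 𝓝 (0 : ℝ), d < ∑ i, √(ℓ i ^ 2 - (y i + t * v i) ^ 2) := by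
    have hcont : Continuous fun t : ℝ => ∑ i, √(ℓ i ^ 2 - (y i + t * v i) ^ 2) := by fun_prop
    exact hcont.continuousAt.eventually_const_lt (by simpa using hspan)
  exact (hfeas.and hslack).exists_gt

end Span

section Transfer

variable {ι : Type*} [Fintype ι]

theorem sum_mul_add_mul (c y v : ι → ℝ) (t : ℝ) :
    ∑ i, c i * (y i + t * v i) = ∑ i, c i * y i + t * ∑ i, c i * v i := by
  rw [mul_sum, ← sum_add_distrib]
  exact sum_congr rfl fun i _ => by ring

variable [DecidableEq ι]

theorem sum_single_sub_single (p q : ι) : ∑ i, (Pi.single q 1 - Pi.single p 1 : ι → ℝ) i = 0 := by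
  simp [sum_sub_distrib]

theorem sum_mul_single_sub_single (c : ι → ℝ) (p q : ι) :
    ∑ i, c i * (Pi.single q 1 - Pi.single p 1 : ι → ℝ) i = c q - c p := by
  simp [mul_sub, sum_sub_distrib, Pi.single_apply]

end Transfer

theorem slack_implies_not_optimal_general (n : ℕ) (hn : 2 ≤ n) (m ℓ : Fin n → ℝ)
    (hm : ∀ i, 0 < m i) (d : ℝ)
    (hd₁ : ∀ i, ℓ i < d) (c : Fin n → ℝ)
    (hc : ∀ i, c i = m i / 2 + ∑ j ∈ Finset.univ.filter (fun j => i < j), m j)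
    (y : Fin n → ℝ) (hy₁ : (∑ i, y i) = 0) (hy₂ : ∀ i, |y i| ≤ ℓ i)
    (hy₃ : d < ∑ i, Real.sqrt (ℓ i ^ 2 - y i ^ 2)) :
    ∃ yhat : Fin n → ℝ, (∑ i, yhat i) = 0 ∧ (∀ i, |yhat i| ≤ ℓ i) ∧
      d ≤ (∑ i, Real.sqrt (ℓ i ^ 2 - yhat i ^ 2)) ∧
      (∑ i, c i * yhat i) < ∑ i, c i * y i := by
  have : Nonempty (Fin n) := Fin.pos_iff_nonempty.1 (by omega)
  obtain ⟨p, q, hpq, hp, hq⟩ := exists_lt_abs_lt_of_lt_sum_sqrt hd₁ hy₂ hy₃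
  set v : Fin n → ℝ := Pi.single q 1 - Pi.single p 1
  have hv : ∀ i, v i ≠ 0 → |y i| < ℓ i := by
    intro i hvi
    by_cases hiq : i = q
    · exact hiq ▸ hq
    by_cases hip : i = p
    · exact hip ▸ hp
    simp [v, hiq, hip] at hvi
  obtain ⟨t, ht, hfeas, hslack⟩ := exists_pos_feasible_of_lt_sum_sqrt hv hy₂ hy₃
  have hcpq : c q < c p := by
    rw [hc p, hc q]
    exact strictAnti_half_add_sum_gt hm hpq
  refine ⟨fun i => y i + t * v i, ?_, hfeas, hslack.le, ?_⟩
  · rw [sum_add_distrib, hy₁, ← mul_sum, sum_single_sub_single, mul_zero, add_zero]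
  · rw [sum_mul_add_mul, sum_mul_single_sub_single]
    linarith [mul_neg_of_pos_of_neg ht (sub_neg.2 hcpq)]

theorem slack_implies_not_optimal (n : ℕ) (hn : 2 ≤ n) (m ℓ : Fin n → ℝ)
    (hm : ∀ i, 0 < m i) (hℓ : ∀ i, 0 < ℓ i) (d : ℝ)
    (hd₁ : ∀ i, ℓ i < d) (hd₂ : d < ∑ i, ℓ i) (c : Fin n → ℝ)
    (hc : ∀ i, c i = m i / 2 + ∑ j ∈ Finset.univ.filter (fun j => i < j), m j)
    (y : Fin n → ℝ) (hy₁ : (∑ i, y i) = 0) (hy₂ : ∀ i, |y i| ≤ ℓ i)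
    (hy₃ : d < ∑ i, Real.sqrt (ℓ i ^ 2 - y i ^ 2)) :
    ∃ yhat : Fin n → ℝ, (∑ i, yhat i) = 0 ∧ (∀ i, |yhat i| ≤ ℓ i) ∧
      d ≤ (∑ i, Real.sqrt (ℓ i ^ 2 - yhat i ^ 2)) ∧
      (∑ i, c i * yhat i) < ∑ i, c i * y i :=
  slack_implies_not_optimal_general n hn m ℓ hm d hd₁ c hc y hy₁ hy₂ hy₃
end

section
/- Every optimal solution of the relaxed hanging chain problem satisfies the spanning constraint with equality: Σ sqrt(ℓ_i^2 - y_i^2) = d. -/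
/-!
If an optimal `y` left slack in the spanning constraint, at most one coordinate could sit on the
boundary `|y i| = ℓ i` of its box, since one free link alone spans at most `ℓ k < d`. Two interior
coordinates `i < j` then allow moving a small amount `ε` of `y i` to `y j`: this keeps `∑ y = 0`,
the box constraints and (by continuity) the spanning constraint, and changes the cost by
`ε (c j - c i) < 0`, because the weights `c` are strictly decreasing.
-/

open Finset Filter Topology

variable {ι : Type*} [Fintype ι]

lemma sum_sqrt_sq_sub_sq_le {ℓ y : ι → ℝ} (hy : ∀ k, |y k| ≤ ℓ k) {k₀ : ι}
    (h : ∀ k ≠ k₀, |y k| = ℓ k) : ∑ k, √(ℓ k ^ 2 - y k ^ 2) ≤ ℓ k₀ := by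
  rw [sum_eq_single k₀ (fun k _ hk => by rw [← h k hk, sq_abs, sub_self, Real.sqrt_zero])
    (by simp)]
  exact Real.sqrt_le_iff.2 ⟨(abs_nonneg _).trans (hy k₀), sub_le_self _ (sq_nonneg _)⟩

lemma exists_ne_abs_lt_of_le_sum_sqrt [Nonempty ι] {ℓ y : ι → ℝ} {d : ℝ}
    (hy : ∀ k, |y k| ≤ ℓ k) (hd : ∀ k, ℓ k < d) (hspan : d ≤ ∑ k, √(ℓ k ^ 2 - y k ^ 2)) :
    ∃ i j, i ≠ j ∧ |y i| < ℓ i ∧ |y j| < ℓ j := by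
  by_contra! h
  obtain ⟨k₀, hk₀⟩ : ∃ k₀, ∀ k ≠ k₀, |y k| = ℓ k := by
    by_cases hint : ∃ k, |y k| < ℓ k
    · obtain ⟨k₀, hk₀⟩ := hint
      exact ⟨k₀, fun k hk => (hy k).antisymm (h k₀ k hk.symm hk₀)⟩
    · simp only [not_exists, not_lt] at hint
      exact ⟨Classical.arbitrary ι, fun k _ => (hy k).antisymm (hint k)⟩
  linarith [sum_sqrt_sq_sub_sq_le hy hk₀, hd k₀]

lemma strictAnti_half_add_sum_filter_lt [LinearOrder ι] {m : ι → ℝ} (hm : ∀ i, 0 < m i) :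
    StrictAnti fun i => m i / 2 + ∑ j ∈ univ.filter (fun j => i < j), m j := by
  intro i j hij
  have hsub : insert j (univ.filter (fun k => j < k)) ⊆ univ.filter (fun k => i < k) := by
    intro k hk
    simp only [mem_insert, mem_filter, mem_univ, true_and] at hk ⊢
    rcases hk with rfl | hk
    exacts [hij, hij.trans hk]
  have hle : m j + ∑ k ∈ univ.filter (fun k => j < k), m k ≤
      ∑ k ∈ univ.filter (fun k => i < k), m k := by
    rw [← sum_insert (by simp)]
    exact sum_le_sum_of_subset_of_nonneg hsub fun k _ _ => (hm k).le
  linarith [hm i, hm j]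

lemma eventually_abs_le_and_lt_sum_sqrt {ℓ y w : ι → ℝ} {d : ℝ} (hy : ∀ k, |y k| ≤ ℓ k)
    (hw : ∀ k, w k ≠ 0 → |y k| < ℓ k) (hspan : d < ∑ k, √(ℓ k ^ 2 - y k ^ 2)) :
    ∀ᶠ ε in 𝓝 (0 : ℝ),
      (∀ k, |y k + ε * w k| ≤ ℓ k) ∧ d < ∑ k, √(ℓ k ^ 2 - (y k + ε * w k) ^ 2) := by
  refine (eventually_all.2 fun k => ?_).and ?_
  · by_cases hk : w k = 0
    · simp [hk, hy k]
    · have hcont : Continuous fun ε : ℝ => |y k + ε * w k| := by fun_prop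
      exact (hcont.continuousAt.eventually_lt continuousAt_const (by simpa using hw k hk)).mono
        fun _ => le_of_lt
  · have hcont : Continuous fun ε : ℝ => ∑ k, √(ℓ k ^ 2 - (y k + ε * w k) ^ 2) := by fun_prop
    exact continuousAt_const.eventually_lt hcont.continuousAt (by simpa using hspan)

theorem optimal_implies_tight_general (n : ℕ) (hn : 2 ≤ n) (m ℓ : Fin n → ℝ)
    (hm : ∀ i, 0 < m i) (d : ℝ)
    (hd₁ : ∀ i, ℓ i < d) (c : Fin n → ℝ)
    (hc : ∀ i, c i = m i / 2 + ∑ j ∈ Finset.univ.filter (fun j => i < j), m j)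
    (y : Fin n → ℝ) (hy₁ : (∑ i, y i) = 0) (hy₂ : ∀ i, |y i| ≤ ℓ i)
    (hy₃ : d ≤ ∑ i, Real.sqrt (ℓ i ^ 2 - y i ^ 2))
    (hopt : ∀ z : Fin n → ℝ, (∑ i, z i) = 0 → (∀ i, |z i| ≤ ℓ i) →
      d ≤ (∑ i, Real.sqrt (ℓ i ^ 2 - z i ^ 2)) →
      (∑ i, c i * y i) ≤ ∑ i, c i * z i) :
    (∑ i, Real.sqrt (ℓ i ^ 2 - y i ^ 2)) = d := by
  by_contra hne
  have hspan : d < ∑ i, √(ℓ i ^ 2 - y i ^ 2) := hy₃.lt_of_ne' hne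
  have : Nonempty (Fin n) := ⟨⟨0, by omega⟩⟩
  obtain ⟨a, b, hab, ha, hb⟩ := exists_ne_abs_lt_of_le_sum_sqrt hy₂ hd₁ hy₃
  have hanti : StrictAnti c := by
    convert strictAnti_half_add_sum_filter_lt hm using 1
    exact funext hc
  obtain ⟨i, j, hcij, hi, hj⟩ : ∃ i j, c j < c i ∧ |y i| < ℓ i ∧ |y j| < ℓ j := by
    rcases hab.lt_or_gt with h | h
    exacts [⟨a, b, hanti h, ha, hb⟩, ⟨b, a, hanti h, hb, ha⟩]
  set w : Fin n → ℝ := Pi.single j 1 - Pi.single i 1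
  have hw : ∀ k, w k ≠ 0 → |y k| < ℓ k := by
    intro k hk
    by_cases hki : k = i
    · exact hki ▸ hi
    by_cases hkj : k = j
    · exact hkj ▸ hj
    simp [w, hki, hkj] at hk
  obtain ⟨ε, ⟨hbox, hε_span⟩, hε⟩ := (((eventually_abs_le_and_lt_sum_sqrt hy₂ hw hspan).filter_mono
    nhdsWithin_le_nhds).and (self_mem_nhdsWithin (s := Set.Ioi 0))).exists
  have hsum : ∑ k, (y k + ε * w k) = 0 := by
    simp [w, sum_add_distrib, ← mul_sum, hy₁, sum_sub_distrib]
  have hcost : ∑ k, c k * (y k + ε * w k) = ∑ k, c k * y k + ε * (c j - c i) := by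
    simp only [w, Pi.sub_apply, Pi.single_apply, mul_sub, mul_ite, mul_one, mul_zero, mul_add,
      sum_add_distrib, sum_sub_distrib, sum_ite_eq', mem_univ, ↓reduceIte, add_right_inj]
    ring
  have hle := hopt _ hsum hbox hε_span.le
  linarith [mul_pos (Set.mem_Ioi.1 hε) (sub_pos.2 hcij)]

theorem optimal_implies_tight (n : ℕ) (hn : 2 ≤ n) (m ℓ : Fin n → ℝ)
    (hm : ∀ i, 0 < m i) (hℓ : ∀ i, 0 < ℓ i) (d : ℝ)
    (hd₁ : ∀ i, ℓ i < d) (hd₂ : d < ∑ i, ℓ i) (c : Fin n → ℝ)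
    (hc : ∀ i, c i = m i / 2 + ∑ j ∈ Finset.univ.filter (fun j => i < j), m j)
    (y : Fin n → ℝ) (hy₁ : (∑ i, y i) = 0) (hy₂ : ∀ i, |y i| ≤ ℓ i)
    (hy₃ : d ≤ ∑ i, Real.sqrt (ℓ i ^ 2 - y i ^ 2))
    (hopt : ∀ z : Fin n → ℝ, (∑ i, z i) = 0 → (∀ i, |z i| ≤ ℓ i) →
      d ≤ (∑ i, Real.sqrt (ℓ i ^ 2 - z i ^ 2)) →
      (∑ i, c i * y i) ≤ ∑ i, c i * z i) :
    (∑ i, Real.sqrt (ℓ i ^ 2 - y i ^ 2)) = d :=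
  optimal_implies_tight_general n hn m ℓ hm d hd₁ c hc y hy₁ hy₂ hy₃ hopt
end
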